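/- arXiv:1211.6261 — 3 statements merged into one kernel-verified Lean document; each statement's English description precedes it below -/
import Mathlib

section
/- Let n be a positive integer and G a subgroup of the symmetric group S_n, acting on integer vectors v ∈ ℕ^n by (σ·v)_i = v_{σ^{-1}(i)}. If an integer vector v of length n is not canonical under G (i.e., v is not the lexicographically greatest element of its G-orbit), then every child of v in the generation tree is also not canonical under G. -/
/-!
Every child of `v` is `v + e_q` for some `q` beyond which `v` vanishes. If `v <lex σ·v`, the two
vectors have the same sum, so their first difference lies at or before `q`; hence
`v + e_q ≤lex σ·v <lex σ·v + e_{σ q} = σ·(v + e_q)`, and `σ` also witnesses that `v + e_q` is not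
canonical.
-/

variable {n : ℕ}

/-- Action of a permutation on integer vectors, on positions: `(σ·v)_i = v_{σ⁻¹(i)}`. -/
def act (σ : Equiv.Perm (Fin n)) (v : Fin n → ℕ) : Fin n → ℕ := fun i => v (σ⁻¹ i)

/-- `v` is canonical under `G` if it is the lexicographically greatest element of its orbit. -/
def IsCanonical (G : Subgroup (Equiv.Perm (Fin n))) (v : Fin n → ℕ) : Prop :=
  ∀ σ ∈ G, toLex (act σ v) ≤ toLex v

/-- Position of the last nonzero entry of `v` (position `0` if `v = 0`). -/
def lastNZ [NeZero n] (v : Fin n → ℕ) : Fin n :=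
  if h : v = 0 then 0
  else ((Finset.univ : Finset (Fin n)).filter fun i => v i ≠ 0).max'
    (by obtain ⟨i, hi⟩ := Function.ne_iff.mp h
        exact ⟨i, Finset.mem_filter.mpr ⟨Finset.mem_univ i, hi⟩⟩)

/-- The father of a vector: decrement its last nonzero entry (fixes the zero vector). -/
def father [NeZero n] (v : Fin n → ℕ) : Fin n → ℕ :=
  Function.update v (lastNZ v) (v (lastNZ v) - 1)

/-- The children of a vector: increment the last nonzero entry, or set a later entry to 1. -/
def children [NeZero n] (v : Fin n → ℕ) : Set (Fin n → ℕ) :=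
  insert (Function.update v (lastNZ v) (v (lastNZ v) + 1))
    {w | ∃ j : Fin n, lastNZ v < j ∧ w = Function.update v j 1}

open Function

lemma sum_act (σ : Equiv.Perm (Fin n)) (v : Fin n → ℕ) : ∑ i, act σ v i = ∑ i, v i :=
  Equiv.sum_comp σ⁻¹ v

lemma act_update (σ : Equiv.Perm (Fin n)) (v : Fin n → ℕ) (i : Fin n) (a : ℕ) :
    act σ (update v i a) = update (act σ v) (σ i) a := by
  ext j
  simp only [act, update_apply, Equiv.Perm.inv_eq_iff_eq]

lemma toLex_update_succ_le {x y : Fin n → ℕ} {p : Fin n} (hx : ∀ i, p < i → x i = 0)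
    (hxy : toLex x < toLex y) (hsum : ∑ i, y i ≤ ∑ i, x i) :
    toLex (update x p (x p + 1)) ≤ toLex y := by
  obtain ⟨k, hk, hxyk⟩ := hxy
  simp only [Pi.toLex_apply] at hk hxyk
  have hkp : k ≤ p := by
    by_contra! hpk
    have : ∑ i, x i < ∑ i, y i := by
      refine Finset.sum_lt_sum (fun i _ => ?_) ⟨k, Finset.mem_univ k, hxyk⟩
      rcases lt_trichotomy i k with hik | rfl | hki
      · exact (hk i hik).le
      · exact hxyk.le
      · simp [hx i (hpk.trans hki)]
    omega
  rcases hkp.lt_or_eq with hk_lt | rfl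
  · refine le_of_lt ⟨k, fun j hj => ?_, ?_⟩
    · simpa [update_of_ne (hj.trans hk_lt).ne] using hk j hj
    · simpa [update_of_ne hk_lt.ne] using hxyk
  · refine Pi.toLex_monotone fun i => ?_
    rcases lt_trichotomy i k with hik | rfl | hki
    · simpa [update_of_ne hik.ne] using (hk i hik).le
    · simpa using hxyk
    · simp [update_of_ne hki.ne', hx i hki]

lemma toLex_update_succ_lt_act {σ : Equiv.Perm (Fin n)} {v : Fin n → ℕ} {q : Fin n}
    (hq : ∀ i, q < i → v i = 0) (hlt : toLex v < toLex (act σ v)) :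
    toLex (update v q (v q + 1)) < toLex (act σ (update v q (v q + 1))) := by
  rw [act_update]
  refine (toLex_update_succ_le hq hlt (sum_act σ v).le).trans_lt
    (Pi.lt_toLex_update_self_iff.mpr ?_)
  simp [act]

lemma apply_eq_zero_of_lastNZ_lt [NeZero n] (v : Fin n → ℕ) {i : Fin n} (hi : lastNZ v < i) :
    v i = 0 := by
  by_contra h
  have hv : v ≠ 0 := fun hv => h (by simp [hv])
  rw [lastNZ, dif_neg hv] at hi
  exact hi.not_ge (Finset.le_max' _ i (Finset.mem_filter.mpr ⟨Finset.mem_univ i, h⟩))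

lemma exists_eq_update_succ_of_mem_children [NeZero n] {v c : Fin n → ℕ} (hc : c ∈ children v) :
    ∃ q, (∀ i, q < i → v i = 0) ∧ c = update v q (v q + 1) := by
  rcases hc with rfl | ⟨j, hj, rfl⟩
  · exact ⟨lastNZ v, fun i => apply_eq_zero_of_lastNZ_lt v, rfl⟩
  · refine ⟨j, fun i hi => apply_eq_zero_of_lastNZ_lt v (hj.trans hi), ?_⟩
    rw [apply_eq_zero_of_lastNZ_lt v hj]

/-- If an integer vector `v` is not canonical under `G`, then every child of `v`
in the generation tree is also not canonical under `G`. -/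
theorem stmt0 (n : ℕ) [NeZero n] (G : Subgroup (Equiv.Perm (Fin n)))
    (v : Fin n → ℕ) (hv : ¬ IsCanonical G v) :
    ∀ c ∈ children v, ¬ IsCanonical G c := by
  intro c hc hcan
  simp only [IsCanonical, not_forall, not_le] at hv
  obtain ⟨σ, hσ, hlt⟩ := hv
  obtain ⟨q, hq, rfl⟩ := exists_eq_update_succ_of_mem_children hc
  exact (hcan σ hσ).not_gt (toLex_update_succ_lt_act hq hlt)
end

section
/- Let n be a positive integer and G a subgroup of S_n acting on ℕ^n on positions. Suppose u is a non-canonical vector whose father is canonical. Then for every proper descendant w of u (a descendant with w ≠ u), the father of w is not canonical. In particular, two distinct non-canonical vectors whose fathers are canonical are never related by the descendant relation. -/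
variable {n : ℕ}

/-- Descendant relation: reflexive-transitive closure of the children relation. -/
def Descendant [NeZero n] (u w : Fin n → ℕ) : Prop :=
  Relation.ReflTransGen (fun a b => b ∈ children a) u w


lemma lastNZ_nz [NeZero n] {v : Fin n → ℕ} (hv : v ≠ 0) : v (lastNZ v) ≠ 0 := by
  rw [lastNZ, dif_neg hv]
  have := Finset.max'_mem ((Finset.univ : Finset (Fin n)).filter fun i => v i ≠ 0)
    (by obtain ⟨i, hi⟩ := Function.ne_iff.mp hv
        exact ⟨i, Finset.mem_filter.mpr ⟨Finset.mem_univ i, hi⟩⟩)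
  exact (Finset.mem_filter.mp this).2

lemma le_lastNZ [NeZero n] {v : Fin n → ℕ} {j : Fin n} (hj : v j ≠ 0) : j ≤ lastNZ v := by
  have hv : v ≠ 0 := fun h => hj (by simp [h])
  rw [lastNZ, dif_neg hv]
  exact Finset.le_max' _ _ (Finset.mem_filter.mpr ⟨Finset.mem_univ j, hj⟩)

lemma zero_of_lastNZ_lt [NeZero n] {v : Fin n → ℕ} {j : Fin n} (hj : lastNZ v < j) : v j = 0 := by
  by_contra h
  exact absurd (le_lastNZ h) (not_le.mpr hj)

lemma lastNZ_eq [NeZero n] {v : Fin n → ℕ} {i : Fin n} (h1 : v i ≠ 0)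
    (h2 : ∀ j, i < j → v j = 0) : lastNZ v = i := by
  have hle : i ≤ lastNZ v := le_lastNZ h1
  have hv : v ≠ 0 := fun h => h1 (by simp [h])
  rcases lt_or_eq_of_le hle with h | h
  · exact absurd (h2 _ h) (lastNZ_nz hv)
  · exact h.symm

lemma father_children [NeZero n] {v w : Fin n → ℕ} (h : w ∈ children v) : father w = v := by
  rcases h with h | ⟨j, hj, rfl⟩
  · -- w = update v (lastNZ v) (v (lastNZ v) + 1)
    subst h
    have hl : lastNZ (Function.update v (lastNZ v) (v (lastNZ v) + 1)) = lastNZ v := by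
      apply lastNZ_eq
      · rw [Function.update_self]; omega
      · intro j hj
        rw [Function.update_of_ne (by exact fun h => absurd (h ▸ hj) (lt_irrefl _))]
        exact zero_of_lastNZ_lt hj
    rw [father, hl, Function.update_self, Function.update_idem]
    simp [Function.update_eq_self_iff]
  · -- w = update v j 1 with lastNZ v < j
    have hl : lastNZ (Function.update v j 1) = j := by
      apply lastNZ_eq
      · rw [Function.update_self]; omega
      · intro k hk
        rw [Function.update_of_ne (by exact fun h => absurd (h ▸ hk) (lt_irrefl _))]
        exact zero_of_lastNZ_lt (hj.trans hk)
    rw [father, hl, Function.update_self, Function.update_idem]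
    rw [Function.update_eq_self_iff]
    exact (zero_of_lastNZ_lt hj).symm

lemma isCanonical_father [NeZero n] {G : Subgroup (Equiv.Perm (Fin n))} {w : Fin n → ℕ}
    (hw : IsCanonical G w) : IsCanonical G (father w) := by
  by_cases hw0 : w = 0
  · have : father w = w := by
      subst hw0
      rw [father, Function.update_eq_self_iff]
      simp
    rw [this]; exact hw
  intro σ hσ
  by_contra hcon
  have htri := @trichotomous _ (Pi.Lex (· < ·) fun {_} => (· < ·))
    (Pi.isTrichotomous_lex _ _ IsWellFounded.wf) (act σ (father w)) (father w)
  have h' : Pi.Lex (· < ·) (fun {_} => (· < ·)) (father w) (act σ (father w)) := by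
    rcases htri with h | h | h
    · exact absurd (Or.inr h) hcon
    · exact absurd (Or.inl (congrArg toLex h)) hcon
    · exact h
  obtain ⟨k, hk1, hk2⟩ := h'
  set i := lastNZ w with hi
  set w' := father w with hw'
  have hwi : w' i + 1 = w i := by
    have h0 := lastNZ_nz hw0
    rw [← hi] at h0
    rw [hw', father, ← hi, Function.update_self]
    omega
  have hne : ∀ l, l ≠ i → w' l = w l := fun l hl => Function.update_of_ne hl _ _
  have hz : ∀ l, i < l → w l = 0 := fun l hl => zero_of_lastNZ_lt hl
  have hz' : ∀ l, i < l → w' l = 0 := fun l hl => (hne l (fun h => absurd (h ▸ hl) (lt_irrefl _))) ▸ (hz l hl)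
  -- step 1 : k ≤ i via sum argument
  have hki : k ≤ i := by
    by_contra hik
    push_neg at hik
    have hsum : ∑ l, act σ w' l = ∑ l, w' l := Equiv.sum_comp σ⁻¹ w'
    have h1 : ∑ l ∈ Finset.Iic k, w' l = ∑ l, w' l := by
      apply Finset.sum_subset (Finset.subset_univ _)
      intro x _ hx
      rw [Finset.mem_Iic] at hx
      exact hz' x (hik.trans (not_le.mp hx))
    have h2 : ∑ l ∈ Finset.Iic k, act σ w' l ≤ ∑ l, act σ w' l :=
      Finset.sum_le_sum_of_subset (Finset.subset_univ _)
    have h3 : ∑ l ∈ Finset.Iio k, w' l = ∑ l ∈ Finset.Iio k, act σ w' l :=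
      Finset.sum_congr rfl fun x hx => hk1 x (Finset.mem_Iio.mp hx)
    have h4 : ∑ l ∈ Finset.Iic k, w' l = ∑ l ∈ Finset.Iio k, w' l + w' k := by
      rw [← Finset.Iio_insert, Finset.sum_insert (by simp)]; omega
    have h5 : ∑ l ∈ Finset.Iic k, act σ w' l
        = ∑ l ∈ Finset.Iio k, act σ w' l + act σ w' k := by
      rw [← Finset.Iio_insert, Finset.sum_insert (by simp)]; omega
    have : ∑ l, w' l < ∑ l, w' l := by
      calc ∑ l, w' l = ∑ l ∈ Finset.Iic k, w' l := h1.symm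
        _ = ∑ l ∈ Finset.Iio k, w' l + w' k := h4
        _ = ∑ l ∈ Finset.Iio k, act σ w' l + w' k := by rw [h3]
        _ < ∑ l ∈ Finset.Iio k, act σ w' l + act σ w' k := by omega
        _ = ∑ l ∈ Finset.Iic k, act σ w' l := h5.symm
        _ ≤ ∑ l, act σ w' l := h2
        _ = ∑ l, w' l := hsum
    exact lt_irrefl _ this
  -- decompositions
  set m := σ i with hm
  have hA : ∀ l, act σ w l = if l = m then act σ w' l + 1 else act σ w' l := by
    intro l
    by_cases hlm : l = m
    · rw [if_pos hlm]
      have : σ⁻¹ l = i := by rw [hlm, hm]; simp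
      show w (σ⁻¹ l) = w' (σ⁻¹ l) + 1
      rw [this, hwi]
    · rw [if_neg hlm]
      have : σ⁻¹ l ≠ i := fun h => hlm (by rw [hm, ← h]; simp)
      exact (hne _ this).symm
  have hB : ∀ l, w l = if l = i then w' l + 1 else w' l := by
    intro l
    by_cases hli : l = i
    · rw [if_pos hli, hli, hwi]
    · rw [if_neg hli, hne l hli]
  clear_value i w' m
  rcases eq_or_lt_of_le (hw σ hσ) with heq | hlt
  · -- act σ w = w
    have heqf : ∀ l, act σ w l = w l := fun l => congrFun (congrArg ofLex heq) l
    have e1 := hA k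
    have e2 := hB k
    have ek := heqf k
    by_cases hkm : k = m
    · rw [if_pos hkm] at e1
      by_cases hkiq : k = i
      · rw [if_pos hkiq] at e2; omega
      · rw [if_neg hkiq] at e2; omega
    · rw [if_neg hkm] at e1
      by_cases hkiq : k = i
      · rw [if_pos hkiq] at e2
        have hmi : m ≠ i := fun h => hkm (hkiq.trans h.symm)
        have em := heqf m
        have f1 := hA m
        rw [if_pos rfl] at f1
        have f2 := hB m
        rw [if_neg hmi] at f2
        rcases lt_trichotomy m i with hmlt | hmeq | hmgt
        · have hmk : m < k := by rw [hkiq]; exact hmlt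
          have h6 : w' m = act σ w' m := hk1 m hmk
          omega
        · exact absurd hmeq hmi
        · have := hz' m hmgt
          omega
      · rw [if_neg hkiq] at e2; omega
  · -- toLex (act σ w) < toLex w
    obtain ⟨K, hK1, hK2⟩ := hlt
    simp only [Pi.toLex_apply] at hK1 hK2
    have hKi : K ≤ i := by
      have : K ≤ lastNZ w := le_lastNZ (by omega)
      rw [← hi] at this; exact this
    rcases lt_trichotomy K k with hKk | hKk | hKk
    · -- K < k
      have e1 := hA K
      have e2 := hB K
      have e3 : w' K = act σ w' K := hk1 K hKk
      have hKne : K ≠ i := fun h => absurd (h ▸ (hKk.trans_le hki)) (lt_irrefl _)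
      rw [if_neg hKne] at e2
      by_cases hKm : K = m
      · rw [if_pos hKm] at e1; omega
      · rw [if_neg hKm] at e1; omega
    · -- K = k
      rw [← hKk] at hk2
      have e1 := hA K
      have e2 := hB K
      by_cases h1 : K = m
      · rw [if_pos h1] at e1
        by_cases h2 : K = i
        · rw [if_pos h2] at e2; omega
        · rw [if_neg h2] at e2; omega
      · rw [if_neg h1] at e1
        by_cases h2 : K = i
        · rw [if_pos h2] at e2; omega
        · rw [if_neg h2] at e2; omega
    · -- k < K
      have e3 : act σ w k = w k := hK1 k hKk
      have e1 := hA k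
      have e2 := hB k
      by_cases hkm : k = m
      · rw [if_pos hkm] at e1
        by_cases hkiq : k = i
        · rw [if_pos hkiq] at e2; omega
        · rw [if_neg hkiq] at e2; omega
      · rw [if_neg hkm] at e1
        by_cases hkiq : k = i
        · exact absurd hKi (not_le.mpr (hkiq ▸ hKk))
        · rw [if_neg hkiq] at e2; omega

lemma not_canonical_descendant [NeZero n] {G : Subgroup (Equiv.Perm (Fin n))}
    {u v : Fin n → ℕ} (h : Descendant u v) (hu : ¬ IsCanonical G u) : ¬ IsCanonical G v := by
  induction h with
  | refl => exact hu
  | tail _ hchild ih =>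
    intro hcan
    exact ih ((father_children hchild) ▸ isCanonical_father hcan)

lemma key_lemma [NeZero n] {G : Subgroup (Equiv.Perm (Fin n))} {u : Fin n → ℕ}
    (hu : ¬ IsCanonical G u) :
    ∀ w : Fin n → ℕ, Descendant u w → w ≠ u → ¬ IsCanonical G (father w) := by
  intro w hd hne
  rcases Relation.ReflTransGen.cases_tail hd with h | ⟨v, huv, hvw⟩
  · exact absurd h hne
  · rw [father_children hvw]
    exact not_canonical_descendant huv hu

/-- If `u` is non-canonical with canonical father, then the father of every proper
descendant of `u` is not canonical; in particular two distinct non-canonical vectors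
with canonical fathers are never related by the descendant relation. -/
theorem stmt7 (n : ℕ) [NeZero n] (G : Subgroup (Equiv.Perm (Fin n)))
    (u : Fin n → ℕ) (hu : ¬ IsCanonical G u) (hfu : IsCanonical G (father u)) :
    (∀ w : Fin n → ℕ, Descendant u w → w ≠ u → ¬ IsCanonical G (father w)) ∧
    (∀ w : Fin n → ℕ, w ≠ u → ¬ IsCanonical G w → IsCanonical G (father w) →
      ¬ Descendant u w ∧ ¬ Descendant w u) := by
  refine ⟨key_lemma hu, fun w hne hw hfw => ⟨fun h => key_lemma hu w h hne hfw,
    fun h => key_lemma hw u h (Ne.symm hne) hfu⟩⟩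
end

section
/- Let n be a positive integer, G a subgroup of S_n, and let v = (n−1, n−2, …, 1, 0) be the staircase vector. Consider the polynomial P := Σ_{w ∈ G·v} x^w in ℚ[x_1,…,x_n], the orbit sum of the monomial x_1^{n−1} x_2^{n−2} ⋯ x_{n−1}. Then the stabilizer of P in S_n equals G: {σ ∈ S_n : σ·P = P} = G. -/
open MvPolynomial

/-- Action of a permutation on exponent vectors (Finsupp version):
`(σ·w)_i = w_{σ⁻¹(i)}`; it matches the action on monomials by renaming variables. -/
def actExp {n : ℕ} (σ : Equiv.Perm (Fin n)) (w : Fin n →₀ ℕ) : Fin n →₀ ℕ :=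
  Finsupp.equivMapDomain σ w

/-- The staircase exponent vector `(n−1, n−2, …, 1, 0)`. -/
noncomputable def stairExp (n : ℕ) : Fin n →₀ ℕ :=
  Finsupp.equivFunOnFinite.symm fun i : Fin n => n - 1 - (i : ℕ)

/-- The orbit sum `Σ_{w ∈ G·a} x^w` of the monomial `x^a` under `G`. -/
noncomputable def orbitSum {n : ℕ} (G : Subgroup (Equiv.Perm (Fin n)))
    (a : Fin n →₀ ℕ) : MvPolynomial (Fin n) ℚ :=
  ∑ᶠ w ∈ {w : Fin n →₀ ℕ | ∃ σ ∈ G, actExp σ a = w}, monomial w (1 : ℚ)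

/- The coefficient of `x^w` in the orbit sum is the indicator of `w ∈ G·a`, and
`rename σ` moves the coefficient of `x^w` to `x^{σ·w}`. So `σ` fixes the orbit sum iff `σ·(G·a) = G·a`,
which holds for `σ ∈ G`; conversely it gives `σ·a = τ·a` for some `τ ∈ G`, and since the staircase
has pairwise distinct entries, its stabilizer is trivial, so `σ = τ ∈ G`. -/

section actExp

variable {n : ℕ}

lemma actExp_one (w : Fin n →₀ ℕ) : actExp 1 w = w := by
  ext i; rfl

lemma actExp_mul (σ τ : Equiv.Perm (Fin n)) (w : Fin n →₀ ℕ) :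
    actExp (σ * τ) w = actExp σ (actExp τ w) := by
  ext i; rfl

lemma actExp_inv_actExp (σ : Equiv.Perm (Fin n)) (w : Fin n →₀ ℕ) :
    actExp σ⁻¹ (actExp σ w) = w := by
  rw [← actExp_mul, inv_mul_cancel, actExp_one]

lemma actExp_left_injective {a : Fin n →₀ ℕ} (ha : Function.Injective a) :
    Function.Injective fun σ : Equiv.Perm (Fin n) => actExp σ a := by
  intro σ τ h
  refine inv_injective (Equiv.ext fun i => ha ?_)
  exact DFunLike.congr_fun h i

end actExp

lemma stairExp_injective (n : ℕ) : Function.Injective (stairExp n) := by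
  intro i j hij
  change n - 1 - (i : ℕ) = n - 1 - (j : ℕ) at hij
  have := i.isLt
  have := j.isLt
  exact Fin.ext (by omega)

lemma coeff_rename_perm {R : Type*} [CommSemiring R] {n : ℕ} (σ : Equiv.Perm (Fin n))
    (P : MvPolynomial (Fin n) R) (w : Fin n →₀ ℕ) :
    coeff w (rename σ P) = coeff (actExp σ⁻¹ w) P := by
  have h : Finsupp.mapDomain σ (actExp σ⁻¹ w) = w := by
    rw [← Finsupp.equivMapDomain_eq_mapDomain]
    change actExp σ (actExp σ⁻¹ w) = w
    rw [← actExp_mul, mul_inv_cancel, actExp_one]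
  conv_lhs => rw [← h]
  exact coeff_rename_mapDomain σ σ.injective P _

section orbitSum

variable {n : ℕ} (G : Subgroup (Equiv.Perm (Fin n))) (a : Fin n →₀ ℕ)

open Classical in
lemma coeff_orbitSum (w : Fin n →₀ ℕ) :
    coeff w (orbitSum G a) = if ∃ σ ∈ G, actExp σ a = w then 1 else 0 := by
  have hfin : {w : Fin n →₀ ℕ | ∃ σ ∈ G, actExp σ a = w}.Finite :=
    (Set.finite_range fun σ : Equiv.Perm (Fin n) => actExp σ a).subset
      fun _ ⟨σ, _, h⟩ => ⟨σ, h⟩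
  rw [orbitSum, ← hfin.coe_toFinset, finsum_mem_coe_finset, coeff_sum]
  simp only [coeff_monomial, Finset.sum_ite_eq', Set.Finite.mem_toFinset, Set.mem_ofPred_eq]

lemma rename_orbitSum_of_mem {σ : Equiv.Perm (Fin n)} (hσ : σ ∈ G) :
    rename σ (orbitSum G a) = orbitSum G a := by
  ext w
  rw [coeff_rename_perm, coeff_orbitSum, coeff_orbitSum]
  congr 1
  refine propext ⟨fun ⟨τ, hτ, h⟩ => ⟨σ * τ, G.mul_mem hσ hτ, ?_⟩,
    fun ⟨τ, hτ, h⟩ => ⟨σ⁻¹ * τ, G.mul_mem (G.inv_mem hσ) hτ, by rw [actExp_mul, h]⟩⟩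
  rw [actExp_mul, h, ← actExp_mul, mul_inv_cancel, actExp_one]

variable {a}

lemma mem_of_rename_orbitSum_eq (ha : Function.Injective a) {σ : Equiv.Perm (Fin n)}
    (h : rename σ (orbitSum G a) = orbitSum G a) : σ ∈ G := by
  classical
  have hcoeff : coeff (actExp σ a) (orbitSum G a) = 1 := by
    rw [← h, coeff_rename_perm, actExp_inv_actExp, coeff_orbitSum,
      if_pos ⟨1, G.one_mem, actExp_one a⟩]
  rw [coeff_orbitSum] at hcoeff
  split_ifs at hcoeff with hmem
  · obtain ⟨τ, hτ, hτσ⟩ := hmem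
    rwa [← actExp_left_injective ha hτσ]
  · exact absurd hcoeff zero_ne_one

lemma setOf_rename_orbitSum_eq (ha : Function.Injective a) :
    {σ : Equiv.Perm (Fin n) | rename σ (orbitSum G a) = orbitSum G a} = G :=
  Set.ext fun _ => ⟨mem_of_rename_orbitSum_eq G ha, rename_orbitSum_of_mem G a⟩

end orbitSum

theorem stmt14_general (n : ℕ) (G : Subgroup (Equiv.Perm (Fin n))) :
    {σ : Equiv.Perm (Fin n) |
        rename σ (orbitSum G (stairExp n)) = orbitSum G (stairExp n)} =
      (G : Set (Equiv.Perm (Fin n))) :=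
  setOf_rename_orbitSum_eq G (stairExp_injective n)

/-- The stabilizer in `S_n` (acting by permuting variables by position, i.e. by
`rename`) of the orbit sum of the staircase monomial
`x_1^{n−1} x_2^{n−2} ⋯ x_{n−1}` is exactly `G`. -/
theorem stmt14 (n : ℕ) (hn : 0 < n) (G : Subgroup (Equiv.Perm (Fin n))) :
    {σ : Equiv.Perm (Fin n) |
        rename σ (orbitSum G (stairExp n)) = orbitSum G (stairExp n)} =
      (G : Set (Equiv.Perm (Fin n))) :=
  stmt14_general n G
end
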